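/- arXiv:1512.03997 — 4 statements merged into one kernel-verified Lean document; each statement's English description precedes it below -/
import Mathlib

section
/- For each r ≥ 0, on a Lie algebra 𝔤 with an ad-invariant metric, the orthogonal complement of the term Cʳ(𝔤) of the lower central series equals the term C_r(𝔤) of the upper central series. -/
/-- On a Lie algebra with an ad-invariant metric, for each `r` the orthogonal complement
of the `r`-th term of the lower central series equals the `r`-th term of the upper
central series. -/
theorem orthogonal_lcs_eq_ucs
    {g : Type*} [LieRing g] [LieAlgebra ℝ g] [FiniteDimensional ℝ g]
    (B : LinearMap.BilinForm ℝ g)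
    (hnd : B.Nondegenerate)
    (hsymm : ∀ x y : g, B x y = B y x)
    (hinv : ∀ x y z : g, B ⁅x, y⁆ z + B y ⁅x, z⁆ = 0)
    (r : ℕ) :
    {x : g | ∀ v ∈ LieModule.lowerCentralSeries ℝ g g r, B x v = 0}
      = (((⊥ : LieSubmodule ℝ g g).ucs r : LieSubmodule ℝ g g) : Set g) := by
  induction r with
  | zero =>
    ext x
    simp only [Set.mem_setOf_eq, LieSubmodule.ucs_zero, LieSubmodule.mem_coe,
      LieSubmodule.mem_bot]
    constructor
    · intro h
      exact hnd.1 x (fun y => h y (LieSubmodule.mem_top y))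
    · rintro rfl v _
      simp
  | succ r ih =>
    ext x
    simp only [Set.mem_setOf_eq, LieSubmodule.ucs_succ, LieSubmodule.mem_coe,
      LieSubmodule.mem_normalizer]
    constructor
    · intro h y
      have : ⁅y, x⁆ ∈ {x : g | ∀ v ∈ LieModule.lowerCentralSeries ℝ g g r, B x v = 0} := by
        intro v hv
        have h1 := hinv y x v
        have h2 : B x ⁅y, v⁆ = 0 := by
          apply h
          rw [LieModule.lowerCentralSeries_succ]
          exact LieSubmodule.lie_mem_lie (LieSubmodule.mem_top y) hv
        linarith
      rw [ih] at this
      exact this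
    · intro h v hv
      rw [LieModule.lowerCentralSeries_succ, ← LieSubmodule.mem_toSubmodule,
        LieSubmodule.lieIdeal_oper_eq_linear_span'] at hv
      have : v ∈ LinearMap.ker (B x) := by
        refine Submodule.span_le.mpr ?_ hv
        rintro _ ⟨y, -, n, hn, rfl⟩
        have h1 := hinv y x n
        have h2 : B ⁅y, x⁆ n = 0 := by
          exact (Set.ext_iff.mp ih ⁅y, x⁆).mpr (h y) n hn
        simp only [SetLike.mem_coe, LinearMap.mem_ker]
        linarith
      simpa using this
end

section
/- If 𝔫 is a 2-step nilpotent Lie algebra with an ad-invariant metric such that 𝔷(𝔫) = [𝔫,𝔫], then dim 𝔫 = 2·dim 𝔷(𝔫). -/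
/-- If `𝔫` is a 2-step nilpotent Lie algebra with an ad-invariant metric such that
`𝔷(𝔫) = [𝔫,𝔫]`, then `dim 𝔫 = 2 · dim 𝔷(𝔫)`. -/
theorem two_step_center_eq_derived_dim
    {n : Type*} [LieRing n] [LieAlgebra ℝ n] [FiniteDimensional ℝ n]
    (h2step : ∀ x y z : n, ⁅x, ⁅y, z⁆⁆ = 0)
    (hzc : LieAlgebra.center ℝ n
            = (⁅(⊤ : LieIdeal ℝ n), (⊤ : LieIdeal ℝ n)⁆ : LieIdeal ℝ n))
    (B : LinearMap.BilinForm ℝ n)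
    (hnd : B.Nondegenerate)
    (hsymm : ∀ x y : n, B x y = B y x)
    (hinv : ∀ x y z : n, B ⁅x, y⁆ z + B y ⁅x, z⁆ = 0) :
    Module.finrank ℝ n = 2 * Module.finrank ℝ (LieAlgebra.center ℝ n) := by
  have hrefl : B.IsRefl := fun x y h => by rw [hsymm]; exact h
  set Z : Submodule ℝ n := LieSubmodule.toSubmodule (LieAlgebra.center ℝ n) with hZ
  -- Z equals the span of brackets
  have hspan : Z = Submodule.span ℝ {m : n | ∃ (x : n) (y : n), ⁅x, y⁆ = m} := by
    rw [hZ, hzc, LieSubmodule.lieIdeal_oper_eq_linear_span']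
    congr 1
    ext m
    simp
  have key : Z = B.orthogonal Z := by
    ext z
    constructor
    · intro hz
      intro w hw
      -- need B w z = 0
      have hzc' : ∀ x : n, ⁅x, z⁆ = 0 := by
        intro x
        exact (LieModule.mem_maxTrivSubmodule ℝ n n z).mp hz x
      rw [hspan] at hw
      induction hw using Submodule.span_induction with
      | mem w hw =>
          obtain ⟨x, y, rfl⟩ := hw
          have := hinv x y z
          rw [hzc' x, map_zero] at this
          simpa using this
      | zero => simp [LinearMap.BilinForm.IsOrtho]
      | add a b _ _ ha hb =>
          simp only [LinearMap.BilinForm.IsOrtho, map_add, LinearMap.add_apply] at *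
          rw [ha, hb, add_zero]
      | smul c a _ ha =>
          simp only [LinearMap.BilinForm.IsOrtho, map_smul, LinearMap.smul_apply] at *
          rw [ha, smul_zero]
    · intro hz
      rw [hZ]
      rw [LieSubmodule.mem_toSubmodule, LieModule.mem_maxTrivSubmodule]
      intro x
      apply hnd.1
      intro y
      have h1 := hinv x z y
      have h2 : B z ⁅x, y⁆ = 0 := by
        rw [hsymm]
        exact hz ⁅x, y⁆ (by rw [hspan]; exact Submodule.subset_span ⟨x, y, rfl⟩)
      have h3 := hinv x y z
      -- from h3 : B ⁅x,y⁆ z + B y ⁅x,z⁆ = 0, and B ⁅x,y⁆ z = 0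
      have h4 : B ⁅x, y⁆ z = 0 := hz ⁅x, y⁆ (by rw [hspan]; exact Submodule.subset_span ⟨x, y, rfl⟩)
      have h5 : B y ⁅x, z⁆ = 0 := by linarith [h3, h4]
      rw [hsymm]; exact h5
  have hdim := LinearMap.BilinForm.finrank_orthogonal hnd Z
  rw [← key] at hdim
  have hle : Module.finrank ℝ Z ≤ Module.finrank ℝ n := Submodule.finrank_le Z
  have hZeq : Module.finrank ℝ (LieAlgebra.center ℝ n) = Module.finrank ℝ Z := rfl
  omega
end

section
/- On a Lie algebra 𝔤 with an ad-invariant metric, if the center 𝔷 decomposes as 𝔷 = 𝔪 ⊕ (𝔷 ∩ [𝔤,𝔤]) for a subspace 𝔪, then 𝔪 is a non-degenerate subspace with respect to the metric; in particular if 𝔪 ≠ 0 the metric Lie algebra is decomposable (𝔪 is a non-degenerate ideal). -/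
/-- On a Lie algebra with an ad-invariant metric, if the center decomposes as
`𝔷 = 𝔪 ⊕ (𝔷 ∩ [𝔤,𝔤])`, then `𝔪` is a non-degenerate subspace; in particular `𝔪` is a
non-degenerate ideal (so if `𝔪 ≠ 0` the metric Lie algebra is decomposable). -/
theorem complement_in_center_nondegenerate
    {g : Type*} [LieRing g] [LieAlgebra ℝ g] [FiniteDimensional ℝ g]
    (B : LinearMap.BilinForm ℝ g)
    (hnd : B.Nondegenerate)
    (hsymm : ∀ x y : g, B x y = B y x)
    (hinv : ∀ x y z : g, B ⁅x, y⁆ z + B y ⁅x, z⁆ = 0)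
    (m : Submodule ℝ g)
    (hm : m ≤ (LieAlgebra.center ℝ g : Submodule ℝ g))
    (hinter : m ⊓ ((LieAlgebra.center ℝ g : Submodule ℝ g)
        ⊓ ((⁅(⊤ : LieIdeal ℝ g), (⊤ : LieIdeal ℝ g)⁆ : LieIdeal ℝ g) : Submodule ℝ g)) = ⊥)
    (hsum : m ⊔ ((LieAlgebra.center ℝ g : Submodule ℝ g)
        ⊓ ((⁅(⊤ : LieIdeal ℝ g), (⊤ : LieIdeal ℝ g)⁆ : LieIdeal ℝ g) : Submodule ℝ g))
        = (LieAlgebra.center ℝ g : Submodule ℝ g)) :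
    (∀ x ∈ m, ∀ y : g, ⁅y, x⁆ ∈ m) ∧
    (∀ x ∈ m, (∀ y ∈ m, B x y = 0) → x = 0) := by
  have hrefl : B.IsRefl := fun x y h => by rw [hsymm]; exact h
  set Z : Submodule ℝ g := (LieAlgebra.center ℝ g : Submodule ℝ g) with hZ
  set D : Submodule ℝ g :=
    ((⁅(⊤ : LieIdeal ℝ g), (⊤ : LieIdeal ℝ g)⁆ : LieIdeal ℝ g) : Submodule ℝ g) with hD
  -- Z = D^⊥
  have hZD : Z = B.orthogonal D := by
    apply le_antisymm
    · intro z hz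
      have hz' : ∀ a : g, ⁅a, z⁆ = 0 := (LieModule.mem_maxTrivSubmodule ℝ g g z).mp hz
      rw [LinearMap.BilinForm.mem_orthogonal_iff]
      intro n hn
      rw [hD, LieIdeal.toLieSubalgebra_toSubmodule, LieSubmodule.lieIdeal_oper_eq_linear_span'] at hn
      refine Submodule.span_induction ?_ ?_ ?_ ?_ hn
      · rintro w ⟨a, -, b, -, rfl⟩
        have h := hinv a b z
        rw [hz' a] at h
        simpa [LinearMap.BilinForm.IsOrtho] using h
      · simp [LinearMap.BilinForm.IsOrtho]
      · intro a b _ _ ha hb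
        simp [LinearMap.add_apply, map_add, ha, hb]
      · intro c a _ ha
        simp [ha]
    · intro z hz
      rw [LinearMap.BilinForm.mem_orthogonal_iff] at hz
      refine (LieModule.mem_maxTrivSubmodule ℝ g g z).mpr fun a => ?_
      apply hnd.1
      intro y
      have h1 : B ⁅a, y⁆ z + B y ⁅a, z⁆ = 0 := hinv a y z
      have h2 : B ⁅a, y⁆ z = 0 := by
        exact hz ⁅a, y⁆ (by
          rw [hD, LieIdeal.toLieSubalgebra_toSubmodule, LieSubmodule.lieIdeal_oper_eq_linear_span']
          exact Submodule.subset_span ⟨a, trivial, y, trivial, rfl⟩)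
      have : B y ⁅a, z⁆ = 0 := by linarith
      rw [hsymm]; exact this
  constructor
  · intro x hx y
    have hc := hm hx
    rw [(LieModule.mem_maxTrivSubmodule ℝ g g x).mp hc y]
    exact m.zero_mem
  · intro x hx hortho
    -- x ⊥ Z
    have hxZ : x ∈ B.orthogonal Z := by
      rw [LinearMap.BilinForm.mem_orthogonal_iff]
      intro n hn
      rw [← hsum] at hn
      obtain ⟨a, ha, b, hb, rfl⟩ := Submodule.mem_sup.mp hn
      have hBa : B a x = 0 := by rw [hsymm]; exact hortho a ha
      have hBb : B b x = 0 := by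
        -- x ∈ Z = D^⊥, b ∈ D
        have hxD : x ∈ B.orthogonal D := hZD ▸ hm hx
        exact hxD b hb.2
      rw [map_add, LinearMap.add_apply, hBa, hBb, add_zero]
    -- hence x ∈ D
    have hxD : x ∈ D := by
      have := LinearMap.BilinForm.orthogonal_orthogonal hnd hrefl D
      rw [hZD] at hxZ
      rw [← this]
      exact hxZ
    have : x ∈ m ⊓ (Z ⊓ D) := ⟨hx, hm hx, hxD⟩
    rw [hinter] at this
    exact this
end

section
/- A 2-step solvable Lie algebra admitting an ad-invariant metric is nilpotent of nilpotency class at most 3. -/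
/-- A 2-step solvable Lie algebra admitting an ad-invariant metric is nilpotent of
nilpotency class at most 3. -/
theorem two_step_solvable_adInvariant_nilpotent
    {g : Type*} [LieRing g] [LieAlgebra ℝ g] [FiniteDimensional ℝ g]
    (h2solv : ∀ x y z w : g, ⁅⁅x, y⁆, ⁅z, w⁆⁆ = 0)
    (B : LinearMap.BilinForm ℝ g)
    (hnd : B.Nondegenerate)
    (hsymm : ∀ x y : g, B x y = B y x)
    (hinv : ∀ x y z : g, B ⁅x, y⁆ z + B y ⁅x, z⁆ = 0) :
    LieRing.IsNilpotent g ∧ LieModule.lowerCentralSeries ℝ g g 3 = ⊥ := by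
  -- skew-adjointness of ad
  have hsk : ∀ x m n : g, B ⁅x, m⁆ n = - B m ⁅x, n⁆ := by
    intro x m n; have := hinv x m n; linarith
  -- R1 : antisymmetry exchanging the two bracket arguments
  have hR1 : ∀ a b c d e : g, B ⁅a, ⁅b, c⁆⁆ ⁅d, e⁆ = - B ⁅a, ⁅d, e⁆⁆ ⁅b, c⁆ := by
    intro a b c d e
    rw [hsk, hsymm]
  -- R2 : exchange of outer elements
  have hR2 : ∀ a b c d e : g, B ⁅a, ⁅b, c⁆⁆ ⁅d, e⁆ = B ⁅d, ⁅b, c⁆⁆ ⁅a, e⁆ := by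
    intro a b c d e
    have h1 : (⁅d, ⁅a, ⁅b, c⁆⁆⁆ : g) = ⁅a, ⁅d, ⁅b, c⁆⁆⁆ := by
      rw [leibniz_lie d a, h2solv d a b c, zero_add]
    calc B ⁅a, ⁅b, c⁆⁆ ⁅d, e⁆ = B ⁅d, e⁆ ⁅a, ⁅b, c⁆⁆ := hsymm _ _
      _ = - B e ⁅d, ⁅a, ⁅b, c⁆⁆⁆ := by rw [hsk]
      _ = - B e ⁅a, ⁅d, ⁅b, c⁆⁆⁆ := by rw [h1]
      _ = B ⁅a, e⁆ ⁅d, ⁅b, c⁆⁆ := by rw [hsk a e]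
      _ = B ⁅d, ⁅b, c⁆⁆ ⁅a, e⁆ := hsymm _ _
  -- S1 : symmetry swapping a and b
  have hS1 : ∀ a b c d e : g, B ⁅a, ⁅b, c⁆⁆ ⁅d, e⁆ = B ⁅b, ⁅a, c⁆⁆ ⁅d, e⁆ := by
    intro a b c d e
    rw [hR1 a b c d e, hR2 a d e b c, hR1 b a c d e]
  -- vanishing of B on [[g,g],g] × [g,g]
  have hzero : ∀ a b c d e : g, B ⁅⁅a, b⁆, c⁆ ⁅d, e⁆ = 0 := by
    intro a b c d e
    have hj : (⁅⁅a, b⁆, c⁆ : g) = ⁅a, ⁅b, c⁆⁆ - ⁅b, ⁅a, c⁆⁆ := by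
      rw [leibniz_lie a b c]; abel
    rw [hj, map_sub, LinearMap.sub_apply, hS1 a b c d e, sub_self]
  have hkey : ∀ a b c d e : g, B ⁅a, ⁅b, c⁆⁆ ⁅d, e⁆ = 0 := by
    intro a b c d e
    have h1 : (⁅a, ⁅b, c⁆⁆ : g) = ⁅⁅c, b⁆, a⁆ := by
      rw [← lie_skew ⁅(c : g), b⁆ a, ← lie_skew b c, lie_neg]
    rw [h1, hzero]
  -- Step A1 : B vanishes on [g,[g,g]] x [g,g]
  have hA1 : ∀ x n : g, n ∈ LieModule.lowerCentralSeries ℝ g g 1 →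
      ∀ d e : g, B ⁅x, n⁆ ⁅d, e⁆ = 0 := by
    intro x n hn d e
    rw [LieModule.lowerCentralSeries_succ, ← LieSubmodule.mem_toSubmodule,
      LieSubmodule.lieIdeal_oper_eq_linear_span'] at hn
    induction hn using Submodule.span_induction with
    | mem m hm => obtain ⟨b, -, c, -, rfl⟩ := hm; exact hkey x b c d e
    | zero => simp
    | add u v hu hv hu' hv' => rw [lie_add, map_add, LinearMap.add_apply, hu', hv', add_zero]
    | smul t u hu hu' => rw [lie_smul, map_smul, LinearMap.smul_apply, hu', smul_zero]
  -- Step A : B vanishes on lcs 2 x [g,g]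
  have hA : ∀ q : g, q ∈ LieModule.lowerCentralSeries ℝ g g 2 → ∀ d e : g, B q ⁅d, e⁆ = 0 := by
    intro q hq d e
    rw [LieModule.lowerCentralSeries_succ, ← LieSubmodule.mem_toSubmodule,
      LieSubmodule.lieIdeal_oper_eq_linear_span'] at hq
    induction hq using Submodule.span_induction with
    | mem m hm => obtain ⟨x, -, n, hn, rfl⟩ := hm; exact hA1 x n hn d e
    | zero => simp
    | add u v hu hv hu' hv' => rw [map_add, LinearMap.add_apply, hu', hv', add_zero]
    | smul t u hu hu' => rw [map_smul, LinearMap.smul_apply, hu', smul_zero]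
  -- Step B : elements of lcs 2 are central
  have hB : ∀ p q : g, q ∈ LieModule.lowerCentralSeries ℝ g g 2 → ⁅p, q⁆ = 0 := by
    intro p q hq
    apply hnd.1
    intro v
    rw [hsk p q v]
    have : B q ⁅p, v⁆ = 0 := hA q hq p v
    rw [this, neg_zero]
  have h3 : LieModule.lowerCentralSeries ℝ g g 3 = ⊥ := by
    rw [eq_bot_iff, show (3 : ℕ) = 2 + 1 from rfl, LieModule.lowerCentralSeries_succ,
      LieSubmodule.lieIdeal_oper_eq_span, LieSubmodule.lieSpan_le]
    rintro m ⟨⟨x, -⟩, ⟨n, hn⟩, rfl⟩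
    simp [hB x n hn]
  exact ⟨(LieModule.isNilpotent_iff ℝ g g).mpr ⟨3, h3⟩, h3⟩
end
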